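/- Let d ≥ 1 and let α : ℝ^d × ℝ^d → ℝ^d be continuous and satisfy the cocycle identity α(x, v+w) = α(x,v) + α(x+v, w). Suppose there exist λ ≥ 1 and C ≥ 0 with λ⁻¹‖v‖ − C ≤ ‖α(x,v)‖ ≤ λ‖v‖ + C for all x, v ∈ ℝ^d. Then for every r > 0 there exists M > 0 such that for all x ∈ ℝ^d and all v ∈ ℝ^d with ‖v‖ ≥ M, one has ‖r^{−d} ∫_{C_r} α(x+s, v) ds‖ ≥ ‖v‖/(2λ). -/

import Mathlib

open MeasureTheory

/-- `Euc d` is `d`-dimensional Euclidean space. -/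
abbrev Euc (d : ℕ) := EuclideanSpace ℝ (Fin d)

/-- The cube `[-r/2, r/2]^d` in `ℝ^d`. -/
def cube (d : ℕ) (r : ℝ) : Set (Euc d) :=
  {s | ∀ i, s i ∈ Set.Icc (-(r / 2)) (r / 2)}

/-! Applying the cocycle identity to `s + v = v + s` gives
`α(x + s, v) - α(x, v) = α(x + v, s) - α(x, s)`, whose norm is at most `2(λ‖s‖ + C)` whatever `v`
is. Hence the average of `α(x + s, v)` over `s ∈ C_r` stays within a distance depending only on
`r` from `α(x, v)`, while `‖α(x, v)‖ ≥ ‖v‖/λ - C` grows linearly in `‖v‖`. -/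

section Cocycle

variable {E F : Type*}

lemma cocycle_shift_sub_eq [AddCommGroup E] [AddCommGroup F] {α : E → E → F}
    (hcoc : ∀ x v w, α x (v + w) = α x v + α (x + v) w) (x s v : E) :
    α (x + s) v - α x v = α (x + v) s - α x s := by
  have h := (hcoc x s v).symm.trans (add_comm s v ▸ hcoc x v s)
  rw [sub_eq_sub_iff_add_eq_add, add_comm, h, add_comm]

lemma norm_cocycle_shift_sub_le [NormedAddCommGroup E] [NormedAddCommGroup F] {α : E → E → F}
    (hcoc : ∀ x v w, α x (v + w) = α x v + α (x + v) w) {lam C : ℝ}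
    (hup : ∀ x v, ‖α x v‖ ≤ lam * ‖v‖ + C) (x s v : E) :
    ‖α (x + s) v - α x v‖ ≤ 2 * (lam * ‖s‖ + C) := by
  rw [cocycle_shift_sub_eq hcoc]
  linarith [norm_sub_le (α (x + v) s) (α x s), hup (x + v) s, hup x s]

end Cocycle

lemma norm_setAverage_sub_le {X E : Type*} [MeasurableSpace X] [NormedAddCommGroup E]
    [NormedSpace ℝ E] [CompleteSpace E] {μ : Measure X} {s : Set X} (hs₀ : μ s ≠ 0)
    (hs : μ s ≠ ⊤) {f : X → E} (hf : IntegrableOn f s μ) {c : E} {ε : ℝ}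
    (hfc : ∀ x ∈ s, ‖f x - c‖ ≤ ε) :
    ‖(⨍ x in s, f x ∂μ) - c‖ ≤ ε := by
  have hμs : 0 < μ.real s := ENNReal.toReal_pos hs₀ hs
  have hsub : (⨍ x in s, f x ∂μ) - c = (μ.real s)⁻¹ • ∫ x in s, (f x - c) ∂μ := by
    rw [setAverage_eq, integral_sub hf (integrableOn_const hs), setIntegral_const, smul_sub,
      inv_smul_smul₀ hμs.ne']
  calc ‖(⨍ x in s, f x ∂μ) - c‖ ≤ (μ.real s)⁻¹ * (ε * μ.real s) := by
        rw [hsub, norm_smul, Real.norm_of_nonneg (inv_nonneg.2 hμs.le)]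
        gcongr
        exact norm_setIntegral_le_of_norm_le_const hs.lt_top hfc
    _ = ε := by field_simp

section Cube

variable (d : ℕ) (r : ℝ)

lemma cube_eq_preimage : cube d r = (MeasurableEquiv.toLp 2 (Fin d → ℝ)).symm ⁻¹'
    (Set.univ.pi fun _ : Fin d => Set.Icc (-(r / 2)) (r / 2)) := by
  ext s
  simp only [cube, Set.mem_ofPred_eq, Set.mem_preimage, Set.mem_univ_pi]
  rfl

lemma isCompact_cube : IsCompact (cube d r) := by
  rw [cube_eq_preimage]
  exact (PiLp.continuousLinearEquiv 2 ℝ (fun _ : Fin d => ℝ)).toHomeomorph.isCompact_preimage.2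
    (isCompact_univ_pi fun _ => isCompact_Icc)

variable {r}

lemma volume_cube (hr : 0 ≤ r) : volume (cube d r) = ENNReal.ofReal (r ^ d) := by
  rw [cube_eq_preimage,
    (EuclideanSpace.volume_preserving_symm_measurableEquiv_toLp (Fin d)).measure_preimage
      (MeasurableSet.univ_pi fun _ => measurableSet_Icc).nullMeasurableSet, volume_pi_pi]
  simp only [Real.volume_Icc, Finset.prod_const, Finset.card_univ, Fintype.card_fin]
  rw [show r / 2 - -(r / 2) = r by ring, ENNReal.ofReal_pow hr]

lemma norm_le_of_mem_cube (hr : 0 ≤ r) {s : Euc d} (hs : s ∈ cube d r) : ‖s‖ ≤ r / 2 * √d := by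
  rw [EuclideanSpace.norm_eq]
  calc √(∑ i, ‖s i‖ ^ 2) ≤ √(∑ _i : Fin d, (r / 2) ^ 2) := by
        gcongr with i
        exact abs_le.2 (hs i)
    _ = r / 2 * √d := by
        rw [Finset.sum_const, Finset.card_univ, Fintype.card_fin, nsmul_eq_mul,
          Real.sqrt_mul (by positivity), Real.sqrt_sq (by positivity), mul_comm]

lemma measureReal_cube (hr : 0 ≤ r) : volume.real (cube d r) = r ^ d := by
  rw [measureReal_def, volume_cube d hr, ENNReal.toReal_ofReal (by positivity)]

end Cube

lemma norm_cubeAverage_sub_le {d : ℕ} {F : Type*} [NormedAddCommGroup F] [NormedSpace ℝ F]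
    [CompleteSpace F] {α : Euc d → Euc d → F}
    (hcoc : ∀ x v w, α x (v + w) = α x v + α (x + v) w) {lam C : ℝ}
    (hup : ∀ x v, ‖α x v‖ ≤ lam * ‖v‖ + C) (hlam : 0 ≤ lam) {r : ℝ} (hr : 0 < r) {v : Euc d}
    (hcont : Continuous fun y => α y v) (x : Euc d) :
    ‖(⨍ s in cube d r, α (x + s) v) - α x v‖ ≤ 2 * (lam * (r / 2 * √d) + C) := by
  have hvol := volume_cube d hr.le
  refine norm_setAverage_sub_le (by simp [hvol, hr]) (by simp [hvol])
    ((hcont.comp (continuous_const_add x)).continuousOn.integrableOn_compact (isCompact_cube d r))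
    fun s hs => (norm_cocycle_shift_sub_le hcoc hup x s v).trans ?_
  gcongr
  exact norm_le_of_mem_cube d hr.le hs

theorem cube_average_lower_bound_general
    (d : ℕ)
    (α : Euc d → Euc d → Euc d)
    (hαcont : Continuous fun p : Euc d × Euc d => α p.1 p.2)
    (hcoc : ∀ x v w : Euc d, α x (v + w) = α x v + α (x + v) w)
    (lam C : ℝ) (hlam : 1 ≤ lam) (hC : 0 ≤ C)
    (hlow : ∀ x v : Euc d, lam⁻¹ * ‖v‖ - C ≤ ‖α x v‖)
    (hup : ∀ x v : Euc d, ‖α x v‖ ≤ lam * ‖v‖ + C) :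
    ∀ r : ℝ, 0 < r → ∃ M : ℝ, 0 < M ∧ ∀ x v : Euc d, M ≤ ‖v‖ →
      ‖v‖ / (2 * lam) ≤ ‖(r ^ d)⁻¹ • ∫ s in cube d r, α (x + s) v‖ := by
  intro r hr
  have hlam₀ : 0 < lam := by linarith
  set K := 2 * (lam * (r / 2 * √d) + C)
  refine ⟨2 * lam * (C + K) + 1, by positivity, fun x v hv => ?_⟩
  set A := (r ^ d)⁻¹ • ∫ s in cube d r, α (x + s) v
  have havg : ‖A - α x v‖ ≤ K := by
    simpa only [setAverage_eq, measureReal_cube d hr.le]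
      using norm_cubeAverage_sub_le hcoc hup hlam₀.le hr (hαcont.uncurry_right v) x
  have hlong : C + K ≤ ‖v‖ / (2 * lam) := by
    rw [le_div_iff₀ (by positivity)]
    linarith
  have hhalf : lam⁻¹ * ‖v‖ = 2 * (‖v‖ / (2 * lam)) := by
    field_simp
  calc ‖v‖ / (2 * lam) ≤ lam⁻¹ * ‖v‖ - C - K := by linarith
    _ ≤ ‖α x v‖ - K := by linarith [hlow x v]
    _ ≤ ‖A‖ := by linarith [norm_sub_norm_le (α x v) A, norm_sub_rev (α x v) A]

/-- For a continuous cocycle on `ℝ^d` that is bi-Lipschitz at large scale, the cube averages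
of `α(·, v)` have norm at least `‖v‖/(2λ)` for all sufficiently long vectors `v`. -/
theorem cube_average_lower_bound
    (d : ℕ) (hd : 1 ≤ d)
    (α : Euc d → Euc d → Euc d)
    (hαcont : Continuous fun p : Euc d × Euc d => α p.1 p.2)
    (hcoc : ∀ x v w : Euc d, α x (v + w) = α x v + α (x + v) w)
    (lam C : ℝ) (hlam : 1 ≤ lam) (hC : 0 ≤ C)
    (hlow : ∀ x v : Euc d, lam⁻¹ * ‖v‖ - C ≤ ‖α x v‖)
    (hup : ∀ x v : Euc d, ‖α x v‖ ≤ lam * ‖v‖ + C) :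
    ∀ r : ℝ, 0 < r → ∃ M : ℝ, 0 < M ∧ ∀ x v : Euc d, M ≤ ‖v‖ →
      ‖v‖ / (2 * lam) ≤ ‖(r ^ d)⁻¹ • ∫ s in cube d r, α (x + s) v‖ :=
  cube_average_lower_bound_general d α hαcont hcoc lam C hlam hC hlow hup
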